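/- arXiv:1709.01273 — 5 statements merged into one kernel-verified Lean document; each statement's English description precedes it below -/
import Mathlib

section
/- Let n ≥ 1, let G be a simple graph on {1,…,n} with neighbor sets N_i, and let X_d, X'_d ∈ ℝ^n with X_{di} > X'_{di} for all i. Suppose B_{ij} = B_{ji} < 0 whenever i ≠ j are adjacent in G, B_{ij} = 0 whenever i ≠ j are not adjacent, and set B_{ii} = Σ_{j∈N_i} B_{ij}. Then for every δ ∈ ℝ^n the symmetric n×n real matrix E(δ) with entries E_{ii} = 1/(X_{di} − X'_{di}) − B_{ii} and E_{ij} = B_{ij}·cos(δ_i − δ_j) for i ≠ j is positive definite, i.e., vᵀ E(δ) v > 0 for every nonzero v ∈ ℝ^n. -/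
open Finset

/-!
Splitting off the diagonal, `vᵀ E(δ) v = ∑ vᵢ² / (X_{di} - X'_{di}) + S`, where `S` collects, for each
ordered pair of neighbours, `B_{ij} (vᵢ vⱼ cos(δᵢ - δⱼ) - vᵢ²)`; the `-vᵢ²` terms are what
`B_{ii} = ∑_{j ∈ Nᵢ} B_{ij}` contributes. Pairing `(i, j)` with `(j, i)` turns `2S` into a sum of
`B_{ij} (2 vᵢ vⱼ cos(δᵢ - δⱼ) - vᵢ² - vⱼ²)`, a product of two nonpositive numbers. So `S ≥ 0`, and the
first sum is positive because `X_{di} > X'_{di}`.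
-/

lemma two_mul_mul_mul_le_sq_add_sq {x y c : ℝ} (hc : |c| ≤ 1) :
    2 * x * y * c ≤ x ^ 2 + y ^ 2 := by
  obtain ⟨hc₁, hc₂⟩ := abs_le.mp hc
  nlinarith [mul_nonneg (sub_nonneg.mpr hc₂) (sq_nonneg (x + y)),
    mul_nonneg (neg_le_iff_add_nonneg.mp hc₁) (sq_nonneg (x - y))]

lemma sum_mul_sq_pos {ι : Type*} [Fintype ι] {d v : ι → ℝ} (hd : ∀ i, 0 < d i) (hv : v ≠ 0) :
    0 < ∑ i, d i * v i ^ 2 := by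
  obtain ⟨i₀, hi₀⟩ := Function.ne_iff.mp hv
  exact sum_pos' (fun i _ => mul_nonneg (hd i).le (sq_nonneg _))
    ⟨i₀, mem_univ _, mul_pos (hd i₀) (sq_pos_of_ne_zero hi₀)⟩

namespace SimpleGraph

variable {V : Type*} [Fintype V] (G : SimpleGraph V) [DecidableRel G.Adj]

lemma sum_sum_neighborFinset_comm {M : Type*} [AddCommMonoid M] (f : V → V → M) :
    ∑ i, ∑ j ∈ G.neighborFinset i, f i j = ∑ i, ∑ j ∈ G.neighborFinset i, f j i :=
  sum_comm' fun i j => by simp [G.adj_comm]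

lemma sum_sum_neighborFinset_mul_nonneg {B c : V → V → ℝ} (v : V → ℝ)
    (hBsym : ∀ i j, G.Adj i j → B i j = B j i) (hBnonpos : ∀ i j, G.Adj i j → B i j ≤ 0)
    (hcsym : ∀ i j, G.Adj i j → c i j = c j i) (hc : ∀ i j, G.Adj i j → |c i j| ≤ 1) :
    0 ≤ ∑ i, ∑ j ∈ G.neighborFinset i, B i j * (v i * v j * c i j - v i ^ 2) := by
  have hswap := G.sum_sum_neighborFinset_comm fun i j => B i j * (v i * v j * c i j - v i ^ 2)
  have hpair : 0 ≤ ∑ i, ∑ j ∈ G.neighborFinset i,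
      B i j * (2 * v i * v j * c i j - v i ^ 2 - v j ^ 2) := by
    refine sum_nonneg fun i _ => sum_nonneg fun j hj => ?_
    rw [mem_neighborFinset] at hj
    exact mul_nonneg_of_nonpos_of_nonpos (hBnonpos i j hj)
      (by linarith [two_mul_mul_mul_le_sq_add_sq (x := v i) (y := v j) (hc i j hj)])
  have hdouble : ∑ i, ∑ j ∈ G.neighborFinset i,
      B i j * (2 * v i * v j * c i j - v i ^ 2 - v j ^ 2) =
      ∑ i, ∑ j ∈ G.neighborFinset i, B i j * (v i * v j * c i j - v i ^ 2) +
      ∑ i, ∑ j ∈ G.neighborFinset i, B j i * (v j * v i * c j i - v j ^ 2) := by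
    simp only [← sum_add_distrib]
    refine sum_congr rfl fun i _ => sum_congr rfl fun j hj => ?_
    rw [mem_neighborFinset] at hj
    rw [← hBsym i j hj, ← hcsym i j hj]
    ring
  linarith

lemma sum_mul_ite_mul_eq [DecidableEq V] {B c : V → V → ℝ} (d v : V → ℝ)
    (hBzero : ∀ i j, i ≠ j → ¬ G.Adj i j → B i j = 0)
    (hBii : ∀ i, B i i = ∑ j ∈ G.neighborFinset i, B i j) :
    ∑ i, ∑ j, v i * (if i = j then d i - B i i else B i j * c i j) * v j =
      ∑ i, d i * v i ^ 2 +
        ∑ i, ∑ j ∈ G.neighborFinset i, B i j * (v i * v j * c i j - v i ^ 2) := by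
  rw [← sum_add_distrib]
  refine sum_congr rfl fun i _ => ?_
  have hoff : ∑ j ∈ {i}ᶜ, v i * (if i = j then d i - B i i else B i j * c i j) * v j =
      ∑ j ∈ G.neighborFinset i, v i * (B i j * c i j) * v j := calc
    _ = ∑ j ∈ G.neighborFinset i, v i * (if i = j then d i - B i i else B i j * c i j) * v j := by
      refine (sum_subset (fun j hj => ?_) fun j hj hjN => ?_).symm
      · simpa [eq_comm] using G.ne_of_adj ((G.mem_neighborFinset i j).mp hj)
      · rw [mem_compl, mem_singleton] at hj
        rw [if_neg (Ne.symm hj), hBzero i j (Ne.symm hj) (by simpa using hjN)]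
        ring
    _ = _ := sum_congr rfl fun j hj => by
      rw [if_neg (G.ne_of_adj ((G.mem_neighborFinset i j).mp hj))]
  have hneighbors : ∑ j ∈ G.neighborFinset i, B i j * (v i * v j * c i j - v i ^ 2) =
      ∑ j ∈ G.neighborFinset i, v i * (B i j * c i j) * v j - B i i * v i ^ 2 := by
    rw [hBii, sum_mul, ← sum_sub_distrib]
    exact sum_congr rfl fun _ _ => by ring
  rw [Fintype.sum_eq_add_sum_compl i, hoff, if_pos rfl, hneighbors]
  ring

end SimpleGraph

theorem stmt0_general (n : ℕ) (G : SimpleGraph (Fin n)) [DecidableRel G.Adj]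
    (Xd Xd' : Fin n → ℝ) (hX : ∀ i, Xd' i < Xd i)
    (B : Fin n → Fin n → ℝ)
    (hBsym : ∀ i j, G.Adj i j → B i j = B j i)
    (hBneg : ∀ i j, G.Adj i j → B i j < 0)
    (hBzero : ∀ i j, i ≠ j → ¬ G.Adj i j → B i j = 0)
    (hBii : ∀ i, B i i = ∑ j ∈ G.neighborFinset i, B i j) :
    ∀ (δ : Fin n → ℝ) (v : Fin n → ℝ), v ≠ 0 →
      0 < ∑ i, ∑ j, v i *
          (if i = j then 1 / (Xd i - Xd' i) - B i i
           else B i j * Real.cos (δ i - δ j)) * v j := by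
  intro δ v hv
  rw [G.sum_mul_ite_mul_eq (fun i => 1 / (Xd i - Xd' i)) v (c := fun i j => Real.cos (δ i - δ j))
    hBzero hBii]
  refine add_pos_of_pos_of_nonneg (sum_mul_sq_pos (fun i => ?_) hv)
    (G.sum_sum_neighborFinset_mul_nonneg v hBsym (fun i j h => (hBneg i j h).le)
      (fun i j _ => by rw [← Real.cos_neg, neg_sub]) fun i j _ => Real.abs_cos_le_one _)
  exact one_div_pos.mpr (sub_pos.mpr (hX i))

/-- For a simple graph `G` on `Fin n` with line susceptances `B i j < 0`
(symmetric) on edges, `B i j = 0` for distinct non-adjacent pairs,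
self-susceptances `B i i = ∑_{j ∈ N_i} B i j`, and reactances `Xd i > Xd' i`,
the matrix `E(δ)` with `E i i = 1/(Xd i - Xd' i) - B i i` and
`E i j = B i j * cos (δ i - δ j)` for `i ≠ j` is positive definite for every `δ`. -/
theorem stmt0 (n : ℕ) (hn : 1 ≤ n) (G : SimpleGraph (Fin n)) [DecidableRel G.Adj]
    (Xd Xd' : Fin n → ℝ) (hX : ∀ i, Xd' i < Xd i)
    (B : Fin n → Fin n → ℝ)
    (hBsym : ∀ i j, G.Adj i j → B i j = B j i)
    (hBneg : ∀ i j, G.Adj i j → B i j < 0)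
    (hBzero : ∀ i j, i ≠ j → ¬ G.Adj i j → B i j = 0)
    (hBii : ∀ i, B i i = ∑ j ∈ G.neighborFinset i, B i j) :
    ∀ (δ : Fin n → ℝ) (v : Fin n → ℝ), v ≠ 0 →
      0 < ∑ i, ∑ j, v i *
          (if i = j then 1 / (Xd i - Xd' i) - B i i
           else B i j * Real.cos (δ i - δ j)) * v j :=
  stmt0_general n G Xd Xd' hX B hBsym hBneg hBzero hBii
end

section
/- (Steady state frequency) Let n ≥ 1 and let G be a CONNECTED simple graph on {1,…,n} with neighbor sets N_i, with B_{ij} = B_{ji} for adjacent i,j. Let K_{pi} > 0 and R_i > 0 for all i, and let δ, V, f̄, P̄_t, P̄_g, ū, P_d ∈ ℝ^n be constants satisfying: (i) f̄_i = f̄_j for every edge {i,j} of G; (ii) 0 = −f̄_i + K_{pi}(P̄_{ti} − P_{di} + Σ_{j∈N_i} V_i V_j B_{ij} sin(δ_i − δ_j)) for every i; (iii) 0 = −P̄_{ti} + P̄_{gi} for every i; (iv) 0 = −f̄_i/R_i − P̄_{gi} + ū_i for every i. Then f̄_i = f* for every i, where f* = (Σ_{j=1}^n (ū_j − P_{dj}))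 / (Σ_{j=1}^n (1/K_{pj} + 1/R_j)). -/
open Finset

/-!
Along every line the frequencies agree, so by connectivity all areas share one frequency `f`.
Eliminating the turbine and governor powers, each area satisfies
`f (1/Kp i + 1/R i) = u i - Pd i + (power flowing out of area i)`. The flow on a line is
antisymmetric in its endpoints (`B` is symmetric and `sin` is odd), so the flows cancel when
summed over all areas, and `f` is the ratio of the two remaining sums.
-/

namespace SimpleGraph

variable {V : Type*} {G : SimpleGraph V}

theorem Preconnected.eq_of_forall_adj {α : Type*} (hG : G.Preconnected) {f : V → α}
    (hf : ∀ i j, G.Adj i j → f i = f j) (i j : V) : f i = f j := by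
  obtain ⟨w⟩ := hG i j
  induction w with
  | nil => rfl
  | cons h _ ih => exact (hf _ _ h).trans ih

theorem sum_sum_neighborFinset_eq_zero [Fintype V] [DecidableRel G.Adj] {M : Type*}
    [AddCommGroup M] {F : V → V → M} (hF : ∀ i j, G.Adj i j → F j i = -F i j) :
    ∑ i, ∑ j ∈ G.neighborFinset i, F i j = 0 := by
  simp only [neighborFinset_eq_filter, sum_filter]
  rw [← Fintype.sum_prod_type']
  refine sum_ninvolution Prod.swap (fun p => ?_) (fun p hp => ?_) (fun _ => mem_univ _)
    Prod.swap_swap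
  · by_cases h : G.Adj p.1 p.2
    · simp [h, h.symm, hF _ _ h]
    · have h' : ¬G.Adj p.2 p.1 := fun h' => h h'.symm
      simp [h, h']
  · have h : G.Adj p.1 p.2 := by by_contra h; simp [h] at hp
    exact fun hp' => h.ne (congrArg Prod.fst hp').symm

end SimpleGraph

theorem steady_state_area_balance {K R f Pt Pg u Pd flow : ℝ} (hK : K ≠ 0) (hR : R ≠ 0)
    (h2 : 0 = -f + K * (Pt - Pd + flow)) (h3 : 0 = -Pt + Pg) (h4 : 0 = -(f / R) - Pg + u) :
    f * (1 / K + 1 / R) = u - Pd + flow := by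
  have hf : f = K * (Pt - Pd + flow) := by linarith
  have hu : u = f / R + Pt := by linarith
  rw [hu, hf]
  field_simp
  ring

theorem stmt2_general (n : ℕ) (G : SimpleGraph (Fin n)) [DecidableRel G.Adj]
    (hGconn : G.Connected)
    (B : Fin n → Fin n → ℝ) (hBsym : ∀ i j, G.Adj i j → B i j = B j i)
    (Kp R : Fin n → ℝ) (hKp : ∀ i, 0 < Kp i) (hR : ∀ i, 0 < R i)
    (δ V fbar Pt Pg u Pd : Fin n → ℝ)
    (h1 : ∀ i j, G.Adj i j → fbar i = fbar j)
    (h2 : ∀ i, 0 = -fbar i + Kp i * (Pt i - Pd i +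
      ∑ j ∈ G.neighborFinset i, V i * V j * B i j * Real.sin (δ i - δ j)))
    (h3 : ∀ i, 0 = -Pt i + Pg i)
    (h4 : ∀ i, 0 = -(fbar i / R i) - Pg i + u i) :
    ∀ i, fbar i = (∑ j, (u j - Pd j)) / (∑ j, (1 / Kp j + 1 / R j)) := by
  intro i
  have hconst := hGconn.preconnected.eq_of_forall_adj h1
  have hflows : ∑ a, ∑ b ∈ G.neighborFinset a, V a * V b * B a b * Real.sin (δ a - δ b) = 0 :=
    G.sum_sum_neighborFinset_eq_zero fun a b hab => by
      rw [hBsym a b hab, ← neg_sub, Real.sin_neg]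
      ring
  have hbalance : fbar i * ∑ j, (1 / Kp j + 1 / R j) = ∑ j, (u j - Pd j) :=
    calc fbar i * ∑ j, (1 / Kp j + 1 / R j) = ∑ j, fbar j * (1 / Kp j + 1 / R j) := by
          rw [mul_sum]
          exact sum_congr rfl fun j _ => by rw [hconst i j]
      _ = ∑ j, (u j - Pd j +
            ∑ b ∈ G.neighborFinset j, V j * V b * B j b * Real.sin (δ j - δ b)) :=
          sum_congr rfl fun j _ =>
            steady_state_area_balance (hKp j).ne' (hR j).ne' (h2 j) (h3 j) (h4 j)
      _ = ∑ j, (u j - Pd j) := by rw [sum_add_distrib, hflows, add_zero]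
  have hD : 0 < ∑ j, (1 / Kp j + 1 / R j) :=
    sum_pos (fun j _ => have := hKp j; have := hR j; by positivity) ⟨i, mem_univ i⟩
  rw [eq_div_iff hD.ne', hbalance]

/-- Steady state frequency: at a steady state of the power network with
turbine-governor dynamics on a connected graph, the frequency deviation of each area equals
`f* = (∑ j, (u j - Pd j)) / (∑ j, (1/Kp j + 1/R j))`. -/
theorem stmt2 (n : ℕ) (hn : 1 ≤ n) (G : SimpleGraph (Fin n)) [DecidableRel G.Adj]
    (hGconn : G.Connected)
    (B : Fin n → Fin n → ℝ) (hBsym : ∀ i j, G.Adj i j → B i j = B j i)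
    (Kp R : Fin n → ℝ) (hKp : ∀ i, 0 < Kp i) (hR : ∀ i, 0 < R i)
    (δ V fbar Pt Pg u Pd : Fin n → ℝ)
    (h1 : ∀ i j, G.Adj i j → fbar i = fbar j)
    (h2 : ∀ i, 0 = -fbar i + Kp i * (Pt i - Pd i +
      ∑ j ∈ G.neighborFinset i, V i * V j * B i j * Real.sin (δ i - δ j)))
    (h3 : ∀ i, 0 = -Pt i + Pg i)
    (h4 : ∀ i, 0 = -(fbar i / R i) - Pg i + u i) :
    ∀ i, fbar i = (∑ j, (u j - Pd j)) / (∑ j, (1 / Kp j + 1 / R j)) :=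
  stmt2_general n G hGconn B hBsym Kp R hKp hR δ V fbar Pt Pg u Pd h1 h2 h3 h4
end

section
/- (Local minimum of the incremental storage function) Let n ≥ 1, let G be a simple graph on {1,…,n} with neighbor sets N_i and edge set E(G), let X_{di} > X'_{di}, B_{ij} = B_{ji} < 0 for adjacent i ≠ j (B_{ij} = 0 otherwise), B_{ii} = Σ_{j∈N_i} B_{ij}, and T_{pi} > 0, K_{pi} > 0 for all i. Let (δ̄, f̄, V̄) ∈ ℝ^{3n} be such that: V̄_i > 0 for all i; |δ̄_i − δ̄_j| < π/2 for every edge {i,j} ∈ E(G); and for all i, 1/(X_{di} − X'_{di}) − B_{ii} + Σ_{j∈N_i} B_{ij}(V̄_i + V̄_j sin²(δ̄_i − δ̄_j))/(V̄_i cos(δ̄_i − δ̄_j)) > 0. Then the incremental storage function 𝒮₁ has a local minimum at (δ̄, f̄, V̄): there is a neighborhood U of (δ̄, f̄, V̄) in ℝ^{3n} such that 𝒮₁(δ, f, V) ≥ 𝒮₁(δ̄, f̄, V̄) = 0 for all (δ, f, V) ∈ U. -/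
/-!
Away from the frequency part, which is a sum of squares, the incremental storage function splits
into `½ Σ_i D_i (V_i - V̄_i)²`, with `D_i = 1/(X_{di} - X'_{di}) - B_{ii}`, plus `½ Σ B_{ij} β_{ij}`
over the (ordered) edges, where `β_{ij}` is the Bregman distance of `(θ, x, y) ↦ x y cos θ`
along the edge. As `B_{ij} < 0`, each `β_{ij}` must be bounded above. Near a point with
`cos θ > 0` the angle increment enters `β` through a strictly concave quadratic, and
maximising it out bounds `β_{ij}` by `(w_{ij} + ε)(V_i - V̄_i)² + (w_{ji} + ε)(V_j - V̄_j)²` for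
any `ε > 0`. Summing over the edges, the security condition says precisely that
`D_i > 2 Σ_j (-B_{ij}) w_{ij}`, which leaves room for a small `ε`.
-/

open Finset

/-- The matrix `E(δ)`: `E i i = 1/(Xd i - Xd' i) - B i i`,
`E i j = B i j * cos (δ i - δ j)` for `i ≠ j` (which is `0` for non-adjacent pairs,
since there `B i j = 0`). -/
noncomputable def Emat (n : ℕ) (B : Fin n → Fin n → ℝ) (Xd Xd' : Fin n → ℝ)
    (δ : Fin n → ℝ) (i j : Fin n) : ℝ :=
  if i = j then 1 / (Xd i - Xd' i) - B i i else B i j * Real.cos (δ i - δ j)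

/-- The incremental storage function `𝒮₁(δ, f, V)` (the Bregman distance of the storage
function `S₁(δ,f,V) = ½ ∑ i (Tp i / Kp i) f i² + ½ Vᵀ E(δ) V` at the point `(δ̄, f̄, V̄)`).
The sum over the unordered edges `{i,j} ∈ E(G)` (each edge counted once) is written as half
the double sum over ordered adjacent pairs, the summand being symmetric in `i` and `j`
when `B` is symmetric. -/
noncomputable def storage1 (n : ℕ) (G : SimpleGraph (Fin n)) [DecidableRel G.Adj]
    (B : Fin n → Fin n → ℝ) (Xd Xd' Tp Kp : Fin n → ℝ)
    (δbar fbar Vbar δ f V : Fin n → ℝ) : ℝ :=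
  (1 / 2) * ∑ i, (Tp i / Kp i) * (f i - fbar i) ^ 2
    + (1 / 2) * ∑ i, ∑ j, V i * Emat n B Xd Xd' δ i j * V j
    - (1 / 2) * ∑ i, ∑ j, Vbar i * Emat n B Xd Xd' δbar i j * Vbar j
    - ∑ i, (∑ j, Emat n B Xd Xd' δbar i j * Vbar j) * (V i - Vbar i)
    + (1 / 2) * ∑ i, ∑ j ∈ G.neighborFinset i,
        B i j * Vbar i * Vbar j * Real.sin (δbar i - δbar j) *
          ((δ i - δ j) - (δbar i - δbar j))

open Real Filter Topology

theorem abs_cos_add_sub_taylor_le (θ : ℝ) {t : ℝ} (ht : |t| ≤ 1) :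
    |cos (θ + t) - (cos θ - t * sin θ - t ^ 2 / 2 * cos θ)| ≤ |t| ^ 3 := by
  have hcos := cos_bound ht
  have hsin := abs_sub_sin_le t
  have h43 : |t| ^ 4 ≤ |t| ^ 3 := pow_le_pow_of_le_one (abs_nonneg t) ht (by norm_num)
  rw [cos_add, show cos θ * cos t - sin θ * sin t - (cos θ - t * sin θ - t ^ 2 / 2 * cos θ)
    = cos θ * (cos t - (1 - t ^ 2 / 2)) + sin θ * (t - sin t) by ring]
  calc _ ≤ |cos θ| * |cos t - (1 - t ^ 2 / 2)| + |sin θ| * |t - sin t| := by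
          grw [abs_add_le, abs_mul, abs_mul]
    _ ≤ 1 * (|t| ^ 4 * (5 / 96)) + 1 * (|t| ^ 3 / 6) := by
          gcongr
          exacts [abs_cos_le_one θ, abs_sin_le_one θ]
    _ ≤ |t| ^ 3 := by linarith [pow_nonneg (abs_nonneg t) 3]

theorem neg_mul_sq_div_two_sub_mul_le {a : ℝ} (ha : 0 < a) (b t : ℝ) :
    -(a * t ^ 2 / 2) - b * t ≤ b ^ 2 / (2 * a) := by
  rw [le_div_iff₀ (by positivity)]
  nlinarith [sq_nonneg (a * t + b)]

theorem exists_pos_forall_mul_lt {ι : Type*} [Finite ι] (a : ι → ℝ) {b : ι → ℝ}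
    (hb : ∀ i, 0 < b i) : ∃ ε > 0, ∀ i, ε * a i < b i := by
  have h : ∀ᶠ ε in 𝓝[>] (0 : ℝ), ∀ i, ε * a i < b i :=
    eventually_all.2 fun i => nhdsWithin_le_nhds <|
      ((continuous_id.mul continuous_const).tendsto' 0 0 (zero_mul _)).eventually_lt_const (hb i)
  exact (h.and self_mem_nhdsWithin).exists.imp fun ε h => ⟨h.2, h.1⟩

theorem SimpleGraph.sum_sum_neighborFinset_comm_s5 {V M : Type*} [Fintype V] [AddCommMonoid M]
    (G : SimpleGraph V) [DecidableRel G.Adj] (F : V → V → M) :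
    ∑ i, ∑ j ∈ G.neighborFinset i, F i j = ∑ i, ∑ j ∈ G.neighborFinset i, F j i :=
  sum_comm' fun i j => by simp [G.adj_comm]

/-- The Bregman distance of `(θ, x, y) ↦ x * y * cos θ` at `(θ, x, y)`, evaluated at
`(θ', x', y')`. -/
noncomputable def cosMulBregman (θ x y θ' x' y' : ℝ) : ℝ :=
  cos θ' * (x' * y') - cos θ * (x * y) - cos θ * (y * (x' - x) + x * (y' - y))
    + x * y * sin θ * (θ' - θ)

/-- Maximising the second-order part of `cosMulBregman θ x y` over the angle increment leaves a
form in the voltage increments `(u, v)` dominated by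
`cosMulWeight θ x y * u ^ 2 + cosMulWeight θ y x * v ^ 2` (see `cosMulWeight_mul_sq_add`). -/
noncomputable def cosMulWeight (θ x y : ℝ) : ℝ := (x + y * sin θ ^ 2) / (2 * x * cos θ)

theorem cosMulWeight_neg (θ x y : ℝ) : cosMulWeight (-θ) x y = cosMulWeight θ x y := by
  simp [cosMulWeight]

theorem cosMulWeight_mul_sq_add {θ x y : ℝ} (hx : x ≠ 0) (hy : y ≠ 0) (hc : cos θ ≠ 0) (u v : ℝ) :
    cosMulWeight θ x y * u ^ 2 + cosMulWeight θ y x * v ^ 2 =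
      sin θ ^ 2 * (y * u + x * v) ^ 2 / (2 * (cos θ * x * y)) + cos θ * (u * v)
        + (u - v) ^ 2 / (2 * cos θ) := by
  unfold cosMulWeight
  field_simp
  linear_combination (-2 * x * y * u * v) * sin_sq_add_cos_sq θ

theorem two_mul_sum_neg_mul_cosMulWeight_add {ι : Type*} (s : Finset ι) (b θ y : ι → ℝ)
    (x ε : ℝ) :
    2 * ∑ j ∈ s, -b j * (cosMulWeight (θ j) x (y j) + ε) =
      -∑ j ∈ s, b j * (x + y j * sin (θ j) ^ 2) / (x * cos (θ j)) + ε * (2 * ∑ j ∈ s, -b j) := by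
  simp only [mul_sum, ← sum_neg_distrib, ← sum_add_distrib, cosMulWeight]
  exact sum_congr rfl fun j _ => by ring

theorem cosMulBregman_add_le_taylor {θ x y t u v : ℝ} (hxy : 0 ≤ x * y) (ht : |t| ≤ 1) :
    cosMulBregman θ x y (θ + t) (x + u) (y + v) ≤
      -(cos θ * x * y / 2 - (x * y * |t| + 2 * |y * u + x * v|)) * t ^ 2
        - sin θ * t * (y * u + x * v) + cos θ * (u * v) + |t| * (|u| * |v|) := by
  set L := y * u + x * v
  set r := cos (θ + t) - (cos θ - t * sin θ - t ^ 2 / 2 * cos θ)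
  have hr : |r| ≤ |t| * t ^ 2 := by
    rw [← sq_abs t, ← pow_succ']
    exact abs_cos_add_sub_taylor_le θ ht
  have hexpand : cosMulBregman θ x y (θ + t) (x + u) (y + v) = x * y * r
      + L * (r - t ^ 2 / 2 * cos θ) - cos θ * x * y * t ^ 2 / 2 - sin θ * t * L
      + cos (θ + t) * (u * v) := by
    simp only [cosMulBregman, r, L]; ring
  have hxyr : x * y * r ≤ x * y * |t| * t ^ 2 := by
    rw [mul_assoc _ |t|]
    exact mul_le_mul_of_nonneg_left ((le_abs_self r).trans hr) hxy
  have hLr : L * (r - t ^ 2 / 2 * cos θ) ≤ 2 * |L| * t ^ 2 := by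
    have : |r - t ^ 2 / 2 * cos θ| ≤ 2 * t ^ 2 :=
      calc |r - t ^ 2 / 2 * cos θ| ≤ |r| + t ^ 2 / 2 * |cos θ| := by
            grw [abs_sub, abs_mul, abs_of_nonneg (by positivity : 0 ≤ t ^ 2 / 2)]
        _ ≤ 1 * t ^ 2 + t ^ 2 / 2 * 1 := by
            grw [hr, ht, abs_cos_le_one θ]
        _ ≤ 2 * t ^ 2 := by nlinarith [sq_nonneg t]
    calc L * (r - t ^ 2 / 2 * cos θ) ≤ |L| * |r - t ^ 2 / 2 * cos θ| := by
          rw [← abs_mul]; exact le_abs_self _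
      _ ≤ |L| * (2 * t ^ 2) := by gcongr
      _ = 2 * |L| * t ^ 2 := by ring
  have huv : cos (θ + t) * (u * v) ≤ cos θ * (u * v) + |t| * (|u| * |v|) := by
    have hcos : |cos (θ + t) - cos θ| ≤ |t| := by simpa using abs_cos_sub_cos_le (θ + t) θ
    calc cos (θ + t) * (u * v) = cos θ * (u * v) + (cos (θ + t) - cos θ) * (u * v) := by ring
      _ ≤ cos θ * (u * v) + |t| * (|u| * |v|) := by
          grw [← hcos, ← abs_mul, ← abs_mul, ← le_abs_self]
  rw [hexpand]
  linarith

theorem cosMulBregman_add_le {θ x y t u v ε k : ℝ} (hx : 0 < x) (hy : 0 < y)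
    (hc : 0 < cos θ) (hk : 0 < k) (hk1 : k < 1)
    (hkε : k * (x ^ 2 + y ^ 2) ≤ ε * (1 - k) * (cos θ * x * y))
    (ht1 : |t| ≤ 1) (htε : |t| ≤ ε)
    (hsmall : x * y * |t| + 2 * |y * u + x * v| ≤ k * (cos θ * x * y) / 2) :
    cosMulBregman θ x y (θ + t) (x + u) (y + v) ≤
      (cosMulWeight θ x y + ε) * u ^ 2 + (cosMulWeight θ y x + ε) * v ^ 2 := by
  -- A fraction `k` of the curvature `-cos θ * x * y * t ^ 2 / 2` absorbs the cubic errors; the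
  -- rest is completed to a square in `t`.
  set s := sin θ
  set m := cos θ * x * y
  set L := y * u + x * v
  have htaylor := cosMulBregman_add_le_taylor (θ := θ) (u := u) (v := v) (mul_pos hx hy).le ht1
  have hsmall' := mul_le_mul_of_nonneg_right hsmall (sq_nonneg t)
  have huv : |t| * (|u| * |v|) ≤ ε / 2 * (u ^ 2 + v ^ 2) := by
    have hamgm : |u| * |v| ≤ (u ^ 2 + v ^ 2) / 2 := by
      nlinarith [two_mul_le_add_sq |u| |v|, sq_abs u, sq_abs v]
    calc |t| * (|u| * |v|) ≤ ε * ((u ^ 2 + v ^ 2) / 2) := by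
          gcongr; exact (abs_nonneg t).trans htε
      _ = ε / 2 * (u ^ 2 + v ^ 2) := by ring
  have ha : 0 < (1 - k) * m := mul_pos (by linarith) (by positivity)
  have hsq := neg_mul_sq_div_two_sub_mul_le ha (s * L) t
  have hextra : (s * L) ^ 2 / (2 * ((1 - k) * m))
      ≤ s ^ 2 * L ^ 2 / (2 * m) + ε / 2 * (u ^ 2 + v ^ 2) := by
    have hsplit : (s * L) ^ 2 / (2 * ((1 - k) * m))
        = s ^ 2 * L ^ 2 / (2 * m) + k * (s ^ 2 * L ^ 2) / (2 * ((1 - k) * m)) := by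
      have : 1 - k ≠ 0 := (sub_pos.2 hk1).ne'
      field_simp; ring
    have hL : s ^ 2 * L ^ 2 ≤ (x ^ 2 + y ^ 2) * (u ^ 2 + v ^ 2) :=
      calc s ^ 2 * L ^ 2 ≤ 1 * L ^ 2 := by gcongr; exact sin_sq_le_one θ
        _ ≤ (x ^ 2 + y ^ 2) * (u ^ 2 + v ^ 2) := by nlinarith [sq_nonneg (x * u - y * v)]
    rw [hsplit, add_le_add_iff_left, div_le_iff₀ (by positivity)]
    calc k * (s ^ 2 * L ^ 2) ≤ k * (x ^ 2 + y ^ 2) * (u ^ 2 + v ^ 2) := by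
          rw [mul_assoc]; gcongr
      _ ≤ ε * (1 - k) * m * (u ^ 2 + v ^ 2) := by gcongr
      _ = ε / 2 * (u ^ 2 + v ^ 2) * (2 * ((1 - k) * m)) := by ring
  have hsos := cosMulWeight_mul_sq_add hx.ne' hy.ne' hc.ne' u v
  have hvu : 0 ≤ (u - v) ^ 2 / (2 * cos θ) := by positivity
  linarith

theorem eventually_cosMulBregman_le {θ x y ε : ℝ} (hx : 0 < x) (hy : 0 < y) (hc : 0 < cos θ)
    (hε : 0 < ε) :
    ∀ᶠ p : ℝ × ℝ × ℝ in 𝓝 (θ, x, y), cosMulBregman θ x y p.1 p.2.1 p.2.2 ≤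
      (cosMulWeight θ x y + ε) * (p.2.1 - x) ^ 2 + (cosMulWeight θ y x + ε) * (p.2.2 - y) ^ 2 := by
  set m := cos θ * x * y
  have hm : 0 < m := by positivity
  -- makes `hkε` an equality
  set k := ε * m / (x ^ 2 + y ^ 2 + ε * m)
  have hk : 0 < k := by positivity
  have hk1 : k < 1 := (div_lt_one (by positivity)).2 (by nlinarith)
  have hkε : k * (x ^ 2 + y ^ 2) ≤ ε * (1 - k) * m := by
    apply le_of_eq
    simp only [k]
    field_simp
    ring
  have h1 : ∀ᶠ p : ℝ × ℝ × ℝ in 𝓝 (θ, x, y), |p.1 - θ| < min 1 ε :=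
    (Continuous.continuousAt (by fun_prop)).eventually_lt continuousAt_const (by simp [hε])
  have h2 : ∀ᶠ p : ℝ × ℝ × ℝ in 𝓝 (θ, x, y),
      x * y * |p.1 - θ| + 2 * |y * (p.2.1 - x) + x * (p.2.2 - y)| < k * m / 2 :=
    (Continuous.continuousAt (by fun_prop)).eventually_lt continuousAt_const
      (by simp only [sub_self, abs_zero, mul_zero, add_zero]; positivity)
  filter_upwards [h1, h2] with ⟨θ', x', y'⟩ h1 h2
  simpa using cosMulBregman_add_le hx hy hc hk hk1 hkε (h1.le.trans (min_le_left _ _))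
    (h1.le.trans (min_le_right _ _)) h2.le

theorem eventually_forall_adj_cosMulBregman_le {n : ℕ} {G : SimpleGraph (Fin n)}
    {δbar fbar Vbar : Fin n → ℝ} {ε : ℝ}
    (hV : ∀ i, 0 < Vbar i) (hcos : ∀ i j, G.Adj i j → 0 < cos (δbar i - δbar j)) (hε : 0 < ε) :
    ∀ᶠ p : (Fin n → ℝ) × (Fin n → ℝ) × (Fin n → ℝ) in 𝓝 (δbar, fbar, Vbar),
      ∀ i j, G.Adj i j →
        cosMulBregman (δbar i - δbar j) (Vbar i) (Vbar j) (p.1 i - p.1 j) (p.2.2 i) (p.2.2 j) ≤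
          (cosMulWeight (δbar i - δbar j) (Vbar i) (Vbar j) + ε) * (p.2.2 i - Vbar i) ^ 2
            + (cosMulWeight (δbar i - δbar j) (Vbar j) (Vbar i) + ε) * (p.2.2 j - Vbar j) ^ 2 := by
  refine eventually_all.2 fun i => eventually_all.2 fun j =>
    eventually_imp_distrib_left.2 fun hij => ?_
  have hcont : Continuous fun p : (Fin n → ℝ) × (Fin n → ℝ) × (Fin n → ℝ) =>
      (p.1 i - p.1 j, p.2.2 i, p.2.2 j) := by fun_prop
  exact (hcont.tendsto (δbar, fbar, Vbar)).eventually
    (eventually_cosMulBregman_le (hV i) (hV j) (hcos i j hij) hε)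

section Storage

variable {n : ℕ} {G : SimpleGraph (Fin n)} [DecidableRel G.Adj] {B : Fin n → Fin n → ℝ}
  {Xd Xd' Tp Kp : Fin n → ℝ}

theorem sum_Emat_mul (hBzero : ∀ i j, i ≠ j → ¬ G.Adj i j → B i j = 0) (δ W : Fin n → ℝ)
    (i : Fin n) :
    ∑ j, Emat n B Xd Xd' δ i j * W j = (1 / (Xd i - Xd' i) - B i i) * W i
      + ∑ j ∈ G.neighborFinset i, B i j * cos (δ i - δ j) * W j := by
  have h : ∀ j, Emat n B Xd Xd' δ i j * W j
      = (if i = j then (1 / (Xd i - Xd' i) - B i i) * W j else 0)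
        + if G.Adj i j then B i j * cos (δ i - δ j) * W j else 0 := by
    intro j
    by_cases hij : i = j
    · subst hij; simp [Emat]
    · by_cases hadj : G.Adj i j <;> simp [Emat, hij, hadj, hBzero i j hij]
  simp_rw [h, sum_add_distrib, sum_ite_eq, mem_univ, if_true,
    ← sum_filter, ← SimpleGraph.neighborFinset_eq_filter]

theorem sum_mul_Emat_mul (hBzero : ∀ i j, i ≠ j → ¬ G.Adj i j → B i j = 0) (δ W : Fin n → ℝ) :
    ∑ i, ∑ j, W i * Emat n B Xd Xd' δ i j * W j = ∑ i, (1 / (Xd i - Xd' i) - B i i) * W i ^ 2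
      + ∑ i, ∑ j ∈ G.neighborFinset i, B i j * cos (δ i - δ j) * (W i * W j) := by
  simp_rw [mul_assoc, ← mul_sum, sum_Emat_mul hBzero, mul_add, mul_sum,
    sum_add_distrib]
  congr 1 <;> refine sum_congr rfl fun i _ => ?_
  · ring
  · exact sum_congr rfl fun j _ => by ring

theorem storage1_eq (hBsym : ∀ i j, G.Adj i j → B i j = B j i)
    (hBzero : ∀ i j, i ≠ j → ¬ G.Adj i j → B i j = 0) (δbar fbar Vbar δ f V : Fin n → ℝ) :
    storage1 n G B Xd Xd' Tp Kp δbar fbar Vbar δ f V =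
      1 / 2 * ∑ i, Tp i / Kp i * (f i - fbar i) ^ 2
        + 1 / 2 * ∑ i, (1 / (Xd i - Xd' i) - B i i) * (V i - Vbar i) ^ 2
        + 1 / 2 * ∑ i, ∑ j ∈ G.neighborFinset i,
            B i j * cosMulBregman (δbar i - δbar j) (Vbar i) (Vbar j) (δ i - δ j) (V i) (V j) := by
  have hgrad : ∑ i, (∑ j, Emat n B Xd Xd' δbar i j * Vbar j) * (V i - Vbar i)
      = ∑ i, (1 / (Xd i - Xd' i) - B i i) * Vbar i * (V i - Vbar i)
        + ∑ i, ∑ j ∈ G.neighborFinset i,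
            B i j * cos (δbar i - δbar j) * (Vbar j * (V i - Vbar i)) := by
    simp_rw [sum_Emat_mul hBzero, add_mul, sum_mul, sum_add_distrib, mul_assoc]
  have hswap : ∑ i, ∑ j ∈ G.neighborFinset i,
        B i j * cos (δbar i - δbar j) * (Vbar i * (V j - Vbar j))
      = ∑ i, ∑ j ∈ G.neighborFinset i,
        B i j * cos (δbar i - δbar j) * (Vbar j * (V i - Vbar i)) := by
    rw [G.sum_sum_neighborFinset_comm_s5]
    refine sum_congr rfl fun i _ => sum_congr rfl fun j hj => ?_
    rw [hBsym j i ((G.mem_neighborFinset i j).1 hj).symm, ← cos_neg, neg_sub]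
  have hsplit : ∑ i, ∑ j ∈ G.neighborFinset i,
        B i j * cosMulBregman (δbar i - δbar j) (Vbar i) (Vbar j) (δ i - δ j) (V i) (V j)
      = ∑ i, ∑ j ∈ G.neighborFinset i, B i j * cos (δ i - δ j) * (V i * V j)
        - ∑ i, ∑ j ∈ G.neighborFinset i, B i j * cos (δbar i - δbar j) * (Vbar i * Vbar j)
        - ∑ i, ∑ j ∈ G.neighborFinset i,
            B i j * cos (δbar i - δbar j) * (Vbar j * (V i - Vbar i))
        - ∑ i, ∑ j ∈ G.neighborFinset i,
            B i j * cos (δbar i - δbar j) * (Vbar i * (V j - Vbar j))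
        + ∑ i, ∑ j ∈ G.neighborFinset i, B i j * Vbar i * Vbar j * sin (δbar i - δbar j) *
            ((δ i - δ j) - (δbar i - δbar j)) := by
    simp only [← sum_sub_distrib, ← sum_add_distrib]
    exact sum_congr rfl fun i _ => sum_congr rfl fun j _ => by
      simp only [cosMulBregman]; ring
  have hdiag : ∑ i, (1 / (Xd i - Xd' i) - B i i) * (V i - Vbar i) ^ 2
      = ∑ i, (1 / (Xd i - Xd' i) - B i i) * V i ^ 2
        - ∑ i, (1 / (Xd i - Xd' i) - B i i) * Vbar i ^ 2
        - 2 * ∑ i, (1 / (Xd i - Xd' i) - B i i) * Vbar i * (V i - Vbar i) := by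
    simp only [mul_sum, ← sum_sub_distrib]
    exact sum_congr rfl fun i _ => by ring
  rw [storage1, sum_mul_Emat_mul hBzero, sum_mul_Emat_mul hBzero, hgrad, hsplit, hswap, hdiag]
  ring

theorem storage1_nonneg (hBsym : ∀ i j, G.Adj i j → B i j = B j i)
    (hBnonpos : ∀ i j, G.Adj i j → B i j ≤ 0)
    (hBzero : ∀ i j, i ≠ j → ¬ G.Adj i j → B i j = 0) (hTK : ∀ i, 0 ≤ Tp i / Kp i)
    {δbar fbar Vbar δ f V : Fin n → ℝ} {ε : ℝ}
    (hnode : ∀ i, 2 * ∑ j ∈ G.neighborFinset i,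
      -B i j * (cosMulWeight (δbar i - δbar j) (Vbar i) (Vbar j) + ε) ≤ 1 / (Xd i - Xd' i) - B i i)
    (hedge : ∀ i j, G.Adj i j →
      cosMulBregman (δbar i - δbar j) (Vbar i) (Vbar j) (δ i - δ j) (V i) (V j) ≤
        (cosMulWeight (δbar i - δbar j) (Vbar i) (Vbar j) + ε) * (V i - Vbar i) ^ 2
          + (cosMulWeight (δbar i - δbar j) (Vbar j) (Vbar i) + ε) * (V j - Vbar j) ^ 2) :
    0 ≤ storage1 n G B Xd Xd' Tp Kp δbar fbar Vbar δ f V := by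
  have hf : 0 ≤ ∑ i, Tp i / Kp i * (f i - fbar i) ^ 2 :=
    sum_nonneg fun i _ => mul_nonneg (hTK i) (sq_nonneg _)
  have hswap : ∑ i, ∑ j ∈ G.neighborFinset i,
        -B i j * ((cosMulWeight (δbar i - δbar j) (Vbar j) (Vbar i) + ε) * (V j - Vbar j) ^ 2)
      = ∑ i, ∑ j ∈ G.neighborFinset i,
        -B i j * ((cosMulWeight (δbar i - δbar j) (Vbar i) (Vbar j) + ε) * (V i - Vbar i) ^ 2) := by
    rw [G.sum_sum_neighborFinset_comm_s5]
    refine sum_congr rfl fun i _ => sum_congr rfl fun j hj => ?_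
    rw [hBsym j i ((G.mem_neighborFinset i j).1 hj).symm, ← neg_sub (δbar i), cosMulWeight_neg]
  have hedges : ∑ i, ∑ j ∈ G.neighborFinset i,
        -B i j * cosMulBregman (δbar i - δbar j) (Vbar i) (Vbar j) (δ i - δ j) (V i) (V j)
      ≤ ∑ i, (1 / (Xd i - Xd' i) - B i i) * (V i - Vbar i) ^ 2 :=
    calc _ ≤ ∑ i, ∑ j ∈ G.neighborFinset i,
            -B i j * ((cosMulWeight (δbar i - δbar j) (Vbar i) (Vbar j) + ε) * (V i - Vbar i) ^ 2
              + (cosMulWeight (δbar i - δbar j) (Vbar j) (Vbar i) + ε) * (V j - Vbar j) ^ 2) := by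
          refine sum_le_sum fun i _ => sum_le_sum fun j hj => ?_
          have hadj := (G.mem_neighborFinset i j).1 hj
          exact mul_le_mul_of_nonneg_left (hedge i j hadj) (neg_nonneg.2 (hBnonpos i j hadj))
      _ = 2 * ∑ i, ∑ j ∈ G.neighborFinset i, -B i j *
            ((cosMulWeight (δbar i - δbar j) (Vbar i) (Vbar j) + ε) * (V i - Vbar i) ^ 2) := by
          simp only [mul_add, sum_add_distrib, hswap]
          ring
      _ = ∑ i, (2 * ∑ j ∈ G.neighborFinset i,
            -B i j * (cosMulWeight (δbar i - δbar j) (Vbar i) (Vbar j) + ε))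
              * (V i - Vbar i) ^ 2 := by
          simp only [mul_sum, sum_mul, mul_assoc]
      _ ≤ _ := sum_le_sum fun i _ => mul_le_mul_of_nonneg_right (hnode i) (sq_nonneg _)
  rw [storage1_eq hBsym hBzero]
  simp only [neg_mul, sum_neg_distrib] at hedges
  linarith

end Storage

theorem stmt5_general (n : ℕ) (G : SimpleGraph (Fin n)) [DecidableRel G.Adj]
    (Xd Xd' : Fin n → ℝ)
    (B : Fin n → Fin n → ℝ)
    (hBsym : ∀ i j, G.Adj i j → B i j = B j i)
    (hBneg : ∀ i j, G.Adj i j → B i j < 0)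
    (hBzero : ∀ i j, i ≠ j → ¬ G.Adj i j → B i j = 0)
    (Tp Kp : Fin n → ℝ) (hTp : ∀ i, 0 < Tp i) (hKp : ∀ i, 0 < Kp i)
    (δbar fbar Vbar : Fin n → ℝ)
    (hV : ∀ i, 0 < Vbar i)
    (hangle : ∀ i j, G.Adj i j → |δbar i - δbar j| < Real.pi / 2)
    (hsec : ∀ i, 0 < 1 / (Xd i - Xd' i) - B i i +
      ∑ j ∈ G.neighborFinset i,
        B i j * (Vbar i + Vbar j * Real.sin (δbar i - δbar j) ^ 2) /
          (Vbar i * Real.cos (δbar i - δbar j))) :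
    storage1 n G B Xd Xd' Tp Kp δbar fbar Vbar δbar fbar Vbar = 0 ∧
    IsLocalMin (fun p : (Fin n → ℝ) × (Fin n → ℝ) × (Fin n → ℝ) =>
        storage1 n G B Xd Xd' Tp Kp δbar fbar Vbar p.1 p.2.1 p.2.2)
      (δbar, fbar, Vbar) := by
  have hzero : storage1 n G B Xd Xd' Tp Kp δbar fbar Vbar δbar fbar Vbar = 0 := by
    simp [storage1_eq hBsym hBzero, cosMulBregman]
  refine ⟨hzero, ?_⟩
  obtain ⟨ε, hε, hεsec⟩ :=
    exists_pos_forall_mul_lt (fun i => 2 * ∑ j ∈ G.neighborFinset i, -B i j) hsec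
  have hnode : ∀ i, 2 * ∑ j ∈ G.neighborFinset i,
      -B i j * (cosMulWeight (δbar i - δbar j) (Vbar i) (Vbar j) + ε)
        ≤ 1 / (Xd i - Xd' i) - B i i := fun i => by
    have := two_mul_sum_neg_mul_cosMulWeight_add (G.neighborFinset i) (B i)
      (fun j => δbar i - δbar j) Vbar (Vbar i) ε
    linarith [hεsec i]
  have hcos : ∀ i j, G.Adj i j → 0 < cos (δbar i - δbar j) := fun i j hij =>
    cos_pos_of_mem_Ioo (abs_lt.1 (hangle i j hij))
  filter_upwards [eventually_forall_adj_cosMulBregman_le (fbar := fbar) hV hcos hε] with p hp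
  rw [hzero]
  exact storage1_nonneg hBsym (fun i j h => (hBneg i j h).le) hBzero
    (fun i => div_nonneg (hTp i).le (hKp i).le) hnode hp

/-- Local minimum of the incremental storage function: under the standing
assumptions on the network parameters and the security conditions on the steady state
`(δ̄, f̄, V̄)` (positive voltages, angle differences in `(-π/2, π/2)` across the edges, and
the strict inequality of Assumption 3), the incremental storage function `𝒮₁` vanishes at
`(δ̄, f̄, V̄)` and has a local minimum there. -/
theorem stmt5 (n : ℕ) (hn : 1 ≤ n) (G : SimpleGraph (Fin n)) [DecidableRel G.Adj]
    (Xd Xd' : Fin n → ℝ) (hX : ∀ i, Xd' i < Xd i)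
    (B : Fin n → Fin n → ℝ)
    (hBsym : ∀ i j, G.Adj i j → B i j = B j i)
    (hBneg : ∀ i j, G.Adj i j → B i j < 0)
    (hBzero : ∀ i j, i ≠ j → ¬ G.Adj i j → B i j = 0)
    (hBii : ∀ i, B i i = ∑ j ∈ G.neighborFinset i, B i j)
    (Tp Kp : Fin n → ℝ) (hTp : ∀ i, 0 < Tp i) (hKp : ∀ i, 0 < Kp i)
    (δbar fbar Vbar : Fin n → ℝ)
    (hV : ∀ i, 0 < Vbar i)
    (hangle : ∀ i j, G.Adj i j → |δbar i - δbar j| < Real.pi / 2)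
    (hsec : ∀ i, 0 < 1 / (Xd i - Xd' i) - B i i +
      ∑ j ∈ G.neighborFinset i,
        B i j * (Vbar i + Vbar j * Real.sin (δbar i - δbar j) ^ 2) /
          (Vbar i * Real.cos (δbar i - δbar j))) :
    storage1 n G B Xd Xd' Tp Kp δbar fbar Vbar δbar fbar Vbar = 0 ∧
    IsLocalMin (fun p : (Fin n → ℝ) × (Fin n → ℝ) × (Fin n → ℝ) =>
        storage1 n G B Xd Xd' Tp Kp δbar fbar Vbar p.1 p.2.1 p.2.2)
      (δbar, fbar, Vbar) :=
  stmt5_general n G Xd Xd' B hBsym hBneg hBzero Tp Kp hTp hKp δbar fbar Vbar hV hangle hsec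
end

section
/- (Incremental passivity of the equivalent reduced system) Let n ≥ 1 and let G^{com} be a simple graph on {1,…,n} with neighbor sets N_i^{com}; write (Lx)_i = Σ_{j∈N_i^{com}}(x_i − x_j) for its Laplacian. For each i let M_{1i} > 0, M_{2i} ≥ 0, M_{3i} > 0, M_{4i} = −(M_{2i}+M_{3i}), T_{ti} > 0, T_{θi} > 0, Q_i > 0 and R_i ∈ ℝ. Let I ⊆ ℝ be an open interval, f : I → ℝ^n continuous, and P, θ : I → ℝ^n differentiable, satisfying for all t ∈ I and all i: M_{3i} T_{ti} Ṗ_i = −(M_{2i}+M_{3i})P_i − M_{4i}θ_i − M_{1i}f_i and T_{θi} θ̇_i = −θ_i + P_i − (M_{1i}Q_i/(M_{2i}+M_{3i}))·(L(Qθ+R))_i, where Qθ+R is the vector with entries Q_jθ_j + R_j. Let P̄, θ̄ ∈ ℝ^n be constants with, for all i: 0 = −(M_{2i}+M_{3i})P̄_i − M_{4i}θ̄_i and 0 = −θ̄_i + P̄_i − (M_{1i}Q_i/(M_{2i}+M_{3i}))·(L(Qθ̄+R))_i. Then S₂(t) := ½ Σ_i (M_{3i}T_{ti}/M_{1i})(P_i(t)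 − P̄_i)² + ½ Σ_i ((M_{2i}+M_{3i})T_{θi}/M_{1i})(θ_i(t) − θ̄_i)² is differentiable on I with Ṡ₂(t) = −Σ_i ((M_{2i}+M_{3i})/M_{1i})(P_i − θ_i)² − Σ_{{i,j}∈E(G^{com})} (Q_i(θ_i − θ̄_i) − Q_j(θ_j − θ̄_j))² − Σ_i (P_i − P̄_i) f_i; in particular, Ṡ₂(t) ≤ Σ_i (P_i(t) − P̄_i)(−f_i(t)), i.e., the system with input −f and output P is incrementally passive with respect to (P̄, θ̄). -/
/-!
With `p = P - P̄` and `q = θ - θ̄`, the steady-state equations force `P̄ = θ̄`, so subtracting them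
from the dynamics gives `M₃ Tₜ ṗ = -(M₂ + M₃)(p - q) - M₁ f` and
`T_θ q̇ = p - q - (M₁ Q / (M₂ + M₃)) L(Q q)`. Differentiating `S₂` and substituting, the cross terms
`±(M₂ + M₃)/M₁ · (p - q)` of the two blocks combine into `-(M₂ + M₃)/M₁ · (p - q)²`, and the
consensus terms add up to `-(Qq)ᵀ L (Qq)`, which is the Laplacian quadratic form
`-∑_{edges} (Qᵢqᵢ - Qⱼqⱼ)²`. Both are nonpositive, leaving the supply rate `-p · f`.
-/

open Finset

namespace SimpleGraph

variable {V : Type*} [Fintype V] (G : SimpleGraph V) [DecidableRel G.Adj]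

theorem sum_mul_sum_neighborFinset_sub {R : Type*} [Field R] [CharZero R] (x : V → R) :
    ∑ i, x i * ∑ j ∈ G.neighborFinset i, (x i - x j) =
      (∑ i, ∑ j ∈ G.neighborFinset i, (x i - x j) ^ 2) / 2 := by
  classical
  have hquad := G.lapMatrix_toLinearMap₂' R x
  simp only [Matrix.toLinearMap₂'_apply', dotProduct, lapMatrix_mulVec_apply, ← sum_filter,
    ← neighborFinset_eq_filter] at hquad
  rw [← hquad]
  refine sum_congr rfl fun i _ => ?_
  rw [sum_sub_distrib, sum_const, card_neighborFinset_eq_degree, nsmul_eq_mul]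

end SimpleGraph

theorem hasDerivAt_half_sum_mul_sq_sub {ι : Type*} [Fintype ι] {x : ℝ → ι → ℝ} {x' : ι → ℝ}
    {t : ℝ} (c xbar : ι → ℝ) (hx : ∀ i, HasDerivAt (fun s => x s i) (x' i) t) :
    HasDerivAt (fun s => (1 / 2) * ∑ i, c i * (x s i - xbar i) ^ 2)
      (∑ i, c i * (x t i - xbar i) * x' i) t := by
  have hsum : HasDerivAt (fun s => ∑ i, c i * (x s i - xbar i) ^ 2)
      (∑ i, c i * (2 * (x t i - xbar i) * x' i)) t :=
    HasDerivAt.fun_sum fun i _ => by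
      simpa using (((hx i).sub_const (xbar i)).fun_pow 2).const_mul (c i)
  refine (hsum.const_mul (1 / 2)).congr_deriv ?_
  rw [mul_sum]
  exact sum_congr rfl fun i _ => by ring

theorem area_storage_rate {M1 M2 M3 M4 Tt Tθ Q P θ P' θ' Pbar θbar f c cbar : ℝ}
    (hM1 : M1 ≠ 0) (hM23 : M2 + M3 ≠ 0) (hM4 : M4 = -(M2 + M3))
    (hPode : M3 * Tt * P' = -(M2 + M3) * P - M4 * θ - M1 * f)
    (hθode : Tθ * θ' = -θ + P - (M1 * Q / (M2 + M3)) * c)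
    (hPbar : 0 = -(M2 + M3) * Pbar - M4 * θbar)
    (hθbar : 0 = -θbar + Pbar - (M1 * Q / (M2 + M3)) * cbar) :
    M3 * Tt / M1 * (P - Pbar) * P' + (M2 + M3) * Tθ / M1 * (θ - θbar) * θ' =
      -((M2 + M3) / M1) * (P - θ) ^ 2 - Q * (θ - θbar) * (c - cbar) - (P - Pbar) * f := by
  subst hM4
  have hbar : Pbar = θbar := by
    have h : (M2 + M3) * (θbar - Pbar) = 0 := by linear_combination -hPbar
    linarith [(mul_eq_zero.mp h).resolve_left hM23]
  subst hbar
  linear_combination (norm := skip) (P - Pbar) / M1 * hPode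
    + (M2 + M3) / M1 * (θ - Pbar) * (hθode - hθbar)
  field_simp
  ring

theorem stmt8_general (n : ℕ) (Gc : SimpleGraph (Fin n)) [DecidableRel Gc.Adj]
    (M1 M2 M3 M4 Tt Tθ Q R : Fin n → ℝ)
    (hM1 : ∀ i, 0 < M1 i) (hM2 : ∀ i, 0 ≤ M2 i) (hM3 : ∀ i, 0 < M3 i)
    (hM4 : ∀ i, M4 i = -(M2 i + M3 i))
    (a b : ℝ) (f P θ P' θ' : ℝ → Fin n → ℝ)
    (hP : ∀ t ∈ Set.Ioo a b, ∀ i, HasDerivAt (fun s => P s i) (P' t i) t)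
    (hθ : ∀ t ∈ Set.Ioo a b, ∀ i, HasDerivAt (fun s => θ s i) (θ' t i) t)
    (hPode : ∀ t ∈ Set.Ioo a b, ∀ i, M3 i * Tt i * P' t i =
      -(M2 i + M3 i) * P t i - M4 i * θ t i - M1 i * f t i)
    (hθode : ∀ t ∈ Set.Ioo a b, ∀ i, Tθ i * θ' t i =
      -θ t i + P t i - (M1 i * Q i / (M2 i + M3 i)) *
        ∑ j ∈ Gc.neighborFinset i, ((Q i * θ t i + R i) - (Q j * θ t j + R j)))
    (Pbar θbar : Fin n → ℝ)
    (hPbar : ∀ i, 0 = -(M2 i + M3 i) * Pbar i - M4 i * θbar i)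
    (hθbar : ∀ i, 0 = -θbar i + Pbar i - (M1 i * Q i / (M2 i + M3 i)) *
      ∑ j ∈ Gc.neighborFinset i, ((Q i * θbar i + R i) - (Q j * θbar j + R j))) :
    ∀ t ∈ Set.Ioo a b,
      HasDerivAt
        (fun s => (1 / 2) * ∑ i, (M3 i * Tt i / M1 i) * (P s i - Pbar i) ^ 2
          + (1 / 2) * ∑ i, ((M2 i + M3 i) * Tθ i / M1 i) * (θ s i - θbar i) ^ 2)
        (-∑ i, ((M2 i + M3 i) / M1 i) * (P t i - θ t i) ^ 2
          - (1 / 2) * ∑ i, ∑ j ∈ Gc.neighborFinset i,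
              (Q i * (θ t i - θbar i) - Q j * (θ t j - θbar j)) ^ 2
          - ∑ i, (P t i - Pbar i) * f t i) t ∧
      (-∑ i, ((M2 i + M3 i) / M1 i) * (P t i - θ t i) ^ 2
          - (1 / 2) * ∑ i, ∑ j ∈ Gc.neighborFinset i,
              (Q i * (θ t i - θbar i) - Q j * (θ t j - θbar j)) ^ 2
          - ∑ i, (P t i - Pbar i) * f t i)
        ≤ ∑ i, (P t i - Pbar i) * (-f t i) := by
  intro t ht
  have hM23 : ∀ i, 0 < M2 i + M3 i := fun i => add_pos_of_nonneg_of_pos (hM2 i) (hM3 i)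
  have hrate := fun i => area_storage_rate (hM1 i).ne' (hM23 i).ne' (hM4 i) (hPode t ht i)
    (hθode t ht i) (hPbar i) (hθbar i)
  have hcoupling : ∀ i,
      ∑ j ∈ Gc.neighborFinset i, ((Q i * θ t i + R i) - (Q j * θ t j + R j))
        - ∑ j ∈ Gc.neighborFinset i, ((Q i * θbar i + R i) - (Q j * θbar j + R j))
        = ∑ j ∈ Gc.neighborFinset i, (Q i * (θ t i - θbar i) - Q j * (θ t j - θbar j)) :=
    fun i => by rw [← sum_sub_distrib]; exact sum_congr rfl fun j _ => by ring
  have hquad := Gc.sum_mul_sum_neighborFinset_sub fun i => Q i * (θ t i - θbar i)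
  simp only [hcoupling] at hrate
  refine ⟨((hasDerivAt_half_sum_mul_sq_sub _ _ (hP t ht)).add
    (hasDerivAt_half_sum_mul_sq_sub _ _ (hθ t ht))).congr_deriv ?_, ?_⟩
  · rw [← sum_add_distrib, sum_congr rfl fun i _ => hrate i, sum_sub_distrib, sum_sub_distrib,
      hquad]
    simp only [neg_mul, sum_neg_distrib]
    ring
  · have hdissipation : 0 ≤ ∑ i, ((M2 i + M3 i) / M1 i) * (P t i - θ t i) ^ 2 :=
      sum_nonneg fun i _ => mul_nonneg (div_pos (hM23 i) (hM1 i)).le (sq_nonneg _)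
    have hedges : 0 ≤ ∑ i, ∑ j ∈ Gc.neighborFinset i,
        (Q i * (θ t i - θbar i) - Q j * (θ t j - θbar j)) ^ 2 :=
      sum_nonneg fun i _ => sum_nonneg fun j _ => sq_nonneg _
    simp only [mul_neg, sum_neg_distrib]
    linarith

/-- Incremental passivity of the equivalent reduced system: along solutions of
the reduced turbine dynamics interconnected with the distributed consensus controller on the
communication graph `Gc` (with Laplacian `(Lx) i = ∑_{j ∈ N_i^{com}} (x i - x j)`), the
incremental storage `S₂` is differentiable with
`Ṡ₂ = -∑ i ((M2 i + M3 i)/M1 i)(P i - θ i)² - ∑_{edges {i,j}} (Q i (θ i - θ̄ i) - Q j (θ j - θ̄ j))²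
      - ∑ i (P i - P̄ i) f i ≤ ∑ i (P i - P̄ i)(-f i)`;
the sum over unordered edges (each counted once) is written as half the double sum over
ordered adjacent pairs, the summand being symmetric. -/
theorem stmt8 (n : ℕ) (hn : 1 ≤ n) (Gc : SimpleGraph (Fin n)) [DecidableRel Gc.Adj]
    (M1 M2 M3 M4 Tt Tθ Q R : Fin n → ℝ)
    (hM1 : ∀ i, 0 < M1 i) (hM2 : ∀ i, 0 ≤ M2 i) (hM3 : ∀ i, 0 < M3 i)
    (hM4 : ∀ i, M4 i = -(M2 i + M3 i)) (hTt : ∀ i, 0 < Tt i) (hTθ : ∀ i, 0 < Tθ i)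
    (hQ : ∀ i, 0 < Q i)
    (a b : ℝ) (f P θ P' θ' : ℝ → Fin n → ℝ)
    (hf : ∀ i, ContinuousOn (fun t => f t i) (Set.Ioo a b))
    (hP : ∀ t ∈ Set.Ioo a b, ∀ i, HasDerivAt (fun s => P s i) (P' t i) t)
    (hθ : ∀ t ∈ Set.Ioo a b, ∀ i, HasDerivAt (fun s => θ s i) (θ' t i) t)
    (hPode : ∀ t ∈ Set.Ioo a b, ∀ i, M3 i * Tt i * P' t i =
      -(M2 i + M3 i) * P t i - M4 i * θ t i - M1 i * f t i)
    (hθode : ∀ t ∈ Set.Ioo a b, ∀ i, Tθ i * θ' t i =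
      -θ t i + P t i - (M1 i * Q i / (M2 i + M3 i)) *
        ∑ j ∈ Gc.neighborFinset i, ((Q i * θ t i + R i) - (Q j * θ t j + R j)))
    (Pbar θbar : Fin n → ℝ)
    (hPbar : ∀ i, 0 = -(M2 i + M3 i) * Pbar i - M4 i * θbar i)
    (hθbar : ∀ i, 0 = -θbar i + Pbar i - (M1 i * Q i / (M2 i + M3 i)) *
      ∑ j ∈ Gc.neighborFinset i, ((Q i * θbar i + R i) - (Q j * θbar j + R j))) :
    ∀ t ∈ Set.Ioo a b,
      HasDerivAt
        (fun s => (1 / 2) * ∑ i, (M3 i * Tt i / M1 i) * (P s i - Pbar i) ^ 2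
          + (1 / 2) * ∑ i, ((M2 i + M3 i) * Tθ i / M1 i) * (θ s i - θbar i) ^ 2)
        (-∑ i, ((M2 i + M3 i) / M1 i) * (P t i - θ t i) ^ 2
          - (1 / 2) * ∑ i, ∑ j ∈ Gc.neighborFinset i,
              (Q i * (θ t i - θbar i) - Q j * (θ t j - θbar j)) ^ 2
          - ∑ i, (P t i - Pbar i) * f t i) t ∧
      (-∑ i, ((M2 i + M3 i) / M1 i) * (P t i - θ t i) ^ 2
          - (1 / 2) * ∑ i, ∑ j ∈ Gc.neighborFinset i,
              (Q i * (θ t i - θbar i) - Q j * (θ t j - θbar j)) ^ 2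
          - ∑ i, (P t i - Pbar i) * f t i)
        ≤ ∑ i, (P t i - Pbar i) * (-f t i) :=
  stmt8_general n Gc M1 M2 M3 M4 Tt Tθ Q R hM1 hM2 hM3 hM4 a b f P θ P' θ' hP hθ hPode hθode Pbar
    θbar hPbar hθbar
end

section
/- (Equilibria of the closed loop achieve zero frequency deviation and economic optimality) Let n ≥ 1, let G and G^{com} be CONNECTED simple graphs on {1,…,n} with neighbor sets N_i and N_i^{com} respectively, and write (Lx)_i = Σ_{j∈N_i^{com}}(x_i − x_j) for the Laplacian of G^{com}. Suppose B_{ij} = B_{ji} for i,j adjacent in G, K_{pi} > 0, Q_i > 0, R_i ∈ ℝ, M_{1i} > 0, M_{2i} ≥ 0, M_{3i} > 0 and M_{4i} = −(M_{2i}+M_{3i}) for all i. Let δ, V, f, P, θ, P_d ∈ ℝ^n be constants satisfying: (i) f_i = f_j for every edge {i,j} of G; (ii) 0 = −f_i + K_{pi}(P_i − P_{di} + Σ_{j∈N_i} V_i V_j B_{ij} sin(δ_i − δ_j)) for all i; (iii) 0 = −(M_{2i}+M_{3i})P_i − M_{4i}θ_i − M_{1i}f_i for all i; (iv) 0 = −θ_i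 + P_i − (M_{1i}Q_i/(M_{2i}+M_{3i}))·(L(Qθ+R))_i for all i, where Qθ+R has entries Q_jθ_j + R_j. Then f = 0, P = θ, and P_i = (λ̄ − R_i)/Q_i for every i with λ̄ = (Σ_{j=1}^n (P_{dj} + R_j/Q_j))/(Σ_{j=1}^n 1/Q_j); in particular the marginal costs Q_iP_i + R_i are identical for all i and P is the optimal generation solving the economic dispatch problem. -/
/-!
Since `f` is constant along the connected graph `G`, it is a single number `c`. Eliminating
`P - θ` between (iii) and (iv) gives `Q i (Lμ)_i = -c` for `μ = Qθ + R`, and the entries of a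
Laplacian image sum to zero, so `c ∑ 1/Q = 0` and `c = 0`. Then `P = θ` and `Lμ = 0`, so the
marginal cost `μ` is constant on the connected graph `Gc`. Summing (ii) over all areas, the
line flows cancel in pairs, so generation meets total demand, which fixes the common marginal
cost to be `λ̄`.
-/

open Finset Matrix

namespace SimpleGraph

variable {V : Type*}

theorem Preconnected.apply_eq_of_forall_adj {G : SimpleGraph V} (hG : G.Preconnected)
    {α : Type*} {f : V → α} (hf : ∀ i j, G.Adj i j → f i = f j) (i j : V) : f i = f j := by
  obtain ⟨w⟩ := hG i j
  induction w with
  | nil => rfl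
  | cons ha _ ih => exact (hf _ _ ha).trans ih

variable [Fintype V] (G : SimpleGraph V) [DecidableRel G.Adj]

theorem sum_sum_neighborFinset_eq_zero_of_antisymm {M : Type*} [AddCommGroup M]
    (F : V → V → M) (hF : ∀ i j, G.Adj i j → F j i = -F i j) :
    ∑ i, ∑ j ∈ G.neighborFinset i, F i j = 0 := by
  classical
  have hpairs : ∑ i, ∑ j ∈ G.neighborFinset i, F i j
      = ∑ p ∈ univ.filter (fun p : V × V => G.Adj p.1 p.2), F p.1 p.2 := by
    simp [neighborFinset_eq_filter, sum_filter, ← univ_product_univ, sum_product]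
  rw [hpairs]
  refine sum_involution (fun p _ => p.swap) (fun p hp => ?_) (fun p hp _ => ?_)
    (fun p hp => ?_) (fun p _ => p.swap_swap)
  all_goals simp only [mem_filter, mem_univ, true_and] at hp
  · simp [hF _ _ hp]
  · exact fun h => hp.ne (congrArg Prod.fst h).symm
  · simpa using hp.symm

theorem sum_sum_neighborFinset_sub_eq_zero {M : Type*} [AddCommGroup M] (x : V → M) :
    ∑ i, ∑ j ∈ G.neighborFinset i, (x i - x j) = 0 :=
  G.sum_sum_neighborFinset_eq_zero_of_antisymm _ fun _ _ _ => (neg_sub _ _).symm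

theorem lapMatrix_mulVec_apply_eq_sum_sub [DecidableEq V] {R : Type*} [NonAssocRing R]
    (x : V → R) (i : V) :
    (G.lapMatrix R *ᵥ x) i = ∑ j ∈ G.neighborFinset i, (x i - x j) := by
  rw [lapMatrix_mulVec_apply, sum_sub_distrib, sum_const, card_neighborFinset_eq_degree,
    nsmul_eq_mul]

theorem Connected.apply_eq_of_sum_neighborFinset_sub_eq_zero [DecidableEq V]
    {G : SimpleGraph V} [DecidableRel G.Adj] (hG : G.Connected) {x : V → ℝ}
    (hx : ∀ i, ∑ j ∈ G.neighborFinset i, (x i - x j) = 0) (i j : V) : x i = x j := by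
  have hker : G.lapMatrix ℝ *ᵥ x = 0 :=
    funext fun i => (G.lapMatrix_mulVec_apply_eq_sum_sub x i).trans (hx i)
  exact G.lapMatrix_mulVec_eq_zero_iff_forall_reachable.mp hker i j (hG.preconnected i j)

theorem eq_zero_of_mul_sum_neighborFinset_sub_eq {Q x : V → ℝ} {c : ℝ} (hQ : ∀ i, Q i ≠ 0)
    (hQsum : ∑ i, 1 / Q i ≠ 0) (h : ∀ i, Q i * ∑ j ∈ G.neighborFinset i, (x i - x j) = c) :
    c = 0 := by
  have hsum : c * ∑ i, 1 / Q i = 0 := by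
    rw [← G.sum_sum_neighborFinset_sub_eq_zero x, mul_sum]
    refine sum_congr rfl fun i _ => ?_
    rw [← h i]
    field_simp [hQ i]
  exact (mul_eq_zero.mp hsum).resolve_right hQsum

theorem sum_eq_sum_of_power_flow_balance {B : V → V → ℝ}
    (hB : ∀ i j, G.Adj i j → B i j = B j i) (U δ P Pd : V → ℝ)
    (hbal : ∀ i, P i - Pd i +
      ∑ j ∈ G.neighborFinset i, U i * U j * B i j * Real.sin (δ i - δ j) = 0) :
    ∑ i, P i = ∑ i, Pd i := by
  have hflow : ∑ i, ∑ j ∈ G.neighborFinset i, U i * U j * B i j * Real.sin (δ i - δ j) = 0 := by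
    refine G.sum_sum_neighborFinset_eq_zero_of_antisymm _ fun i j hij => ?_
    rw [hB i j hij, ← neg_sub, Real.sin_neg]
    ring
  have hsum := sum_eq_zero fun i (_ : i ∈ univ) => hbal i
  rw [sum_add_distrib, sum_sub_distrib, hflow] at hsum
  linarith

end SimpleGraph

theorem mul_eq_neg_of_sliding_equilibrium {m₁ m₂₃ m₄ p θ f q l : ℝ} (hm₁ : m₁ ≠ 0)
    (hm₂₃ : m₂₃ ≠ 0) (hm₄ : m₄ = -m₂₃) (hturbine : 0 = -m₂₃ * p - m₄ * θ - m₁ * f)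
    (hconsensus : 0 = -θ + p - m₁ * q / m₂₃ * l) : q * l = -f := by
  have hgap : m₂₃ * (p - θ) = m₁ * (q * l) := by
    field_simp at hconsensus
    linarith
  subst hm₄
  exact mul_left_cancel₀ hm₁ (by linarith)

theorem eq_div_of_marginal_cost_eq {ι : Type*} [Fintype ι] {Q R P Pd : ι → ℝ} {c : ℝ}
    (hQ : ∀ i, Q i ≠ 0) (hQsum : ∑ j, 1 / Q j ≠ 0) (hc : ∀ i, Q i * P i + R i = c)
    (hbal : ∑ i, P i = ∑ i, Pd i) (i : ι) :
    P i = ((∑ j, (Pd j + R j / Q j)) / (∑ j, 1 / Q j) - R i) / Q i := by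
  have hP : ∀ i, P i = (c - R i) / Q i := fun i => by
    rw [eq_div_iff (hQ i), ← hc i]
    ring
  have hcval : c = (∑ j, (Pd j + R j / Q j)) / (∑ j, 1 / Q j) := by
    rw [eq_div_iff hQsum, sum_add_distrib, ← hbal, mul_sum, ← sum_add_distrib]
    exact sum_congr rfl fun j _ => by rw [hP j]; field_simp; ring
  rw [hP i, hcval]

/-- Equilibria of the closed loop achieve zero frequency deviation and economic
optimality: at any equilibrium of the power network (on the connected physical graph `G`)
interconnected with the reduced turbine dynamics and the distributed consensus controller
(on the connected communication graph `Gc`), the frequency deviation is zero, `P = θ`, and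
the generation is the optimal one: `P i = (λ̄ - R i)/Q i` with
`λ̄ = (∑ j, (Pd j + R j / Q j)) / (∑ j, 1 / Q j)`; in particular the marginal costs
`Q i * P i + R i` are identical for all areas. -/
theorem stmt9 (n : ℕ) (hn : 1 ≤ n)
    (G Gc : SimpleGraph (Fin n)) [DecidableRel G.Adj] [DecidableRel Gc.Adj]
    (hG : G.Connected) (hGc : Gc.Connected)
    (B : Fin n → Fin n → ℝ) (hBsym : ∀ i j, G.Adj i j → B i j = B j i)
    (Kp Q R M1 M2 M3 M4 : Fin n → ℝ)
    (hKp : ∀ i, 0 < Kp i) (hQ : ∀ i, 0 < Q i) (hM1 : ∀ i, 0 < M1 i)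
    (hM2 : ∀ i, 0 ≤ M2 i) (hM3 : ∀ i, 0 < M3 i) (hM4 : ∀ i, M4 i = -(M2 i + M3 i))
    (δ V f P θ Pd : Fin n → ℝ)
    (h1 : ∀ i j, G.Adj i j → f i = f j)
    (h2 : ∀ i, 0 = -f i + Kp i * (P i - Pd i +
      ∑ j ∈ G.neighborFinset i, V i * V j * B i j * Real.sin (δ i - δ j)))
    (h3 : ∀ i, 0 = -(M2 i + M3 i) * P i - M4 i * θ i - M1 i * f i)
    (h4 : ∀ i, 0 = -θ i + P i - (M1 i * Q i / (M2 i + M3 i)) *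
      ∑ j ∈ Gc.neighborFinset i, ((Q i * θ i + R i) - (Q j * θ j + R j))) :
    (∀ i, f i = 0) ∧ (∀ i, P i = θ i) ∧
    (∀ i, P i = ((∑ j, (Pd j + R j / Q j)) / (∑ j, 1 / Q j) - R i) / Q i) ∧
    (∀ i j, Q i * P i + R i = Q j * P j + R j) := by
  set μ : Fin n → ℝ := fun i => Q i * θ i + R i
  have hM23 : ∀ i, M2 i + M3 i ≠ 0 := fun i => by linarith [hM2 i, hM3 i]
  have hQL : ∀ i, Q i * ∑ j ∈ Gc.neighborFinset i, (μ i - μ j) = -f i := fun i =>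
    mul_eq_neg_of_sliding_equilibrium (hM1 i).ne' (hM23 i) (hM4 i) (h3 i) (h4 i)
  have hQsum : ∑ j, 1 / Q j ≠ 0 :=
    (sum_pos (fun j _ => one_div_pos.mpr (hQ j)) (univ_nonempty_iff.mpr ⟨⟨0, hn⟩⟩)).ne'
  have hf0 : ∀ i, f i = 0 := fun i => neg_eq_zero.mp <|
    Gc.eq_zero_of_mul_sum_neighborFinset_sub_eq (fun j => (hQ j).ne') hQsum fun j => by
      rw [hQL j, hG.preconnected.apply_eq_of_forall_adj h1 j i]
  have hPθ : ∀ i, P i = θ i := fun i => by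
    have := h3 i
    rw [hf0 i, hM4 i] at this
    exact mul_left_cancel₀ (hM23 i) (by linarith)
  have hμ : ∀ i j, μ i = μ j := hGc.apply_eq_of_sum_neighborFinset_sub_eq_zero fun i =>
    (mul_eq_zero.mp ((hQL i).trans (by rw [hf0 i, neg_zero]))).resolve_left (hQ i).ne'
  have hmc : ∀ i j, Q i * P i + R i = Q j * P j + R j := fun i j => by
    rw [hPθ i, hPθ j]
    exact hμ i j
  have hbal : ∑ i, P i = ∑ i, Pd i := G.sum_eq_sum_of_power_flow_balance hBsym V δ P Pd fun i =>
    (mul_eq_zero.mp (by linarith [h2 i, hf0 i])).resolve_left (hKp i).ne'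
  exact ⟨hf0, hPθ, eq_div_of_marginal_cost_eq (fun i => (hQ i).ne') hQsum
    (fun i => hmc i ⟨0, hn⟩) hbal, hmc⟩
end
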